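/- Let N be a positive integer, H an additive subgroup of ZMod N, and a, b : ZMod N. If f₁, f₂ : ZMod N → ℂ both satisfy supp fᵢ ⊆ a + H and supp 𝓕 fᵢ ⊆ b + H^⊥, and f₁ is nonzero, then there exists λ ∈ ℂ with f₂ = λ · f₁. (This is Corollary 3.17 of the paper — there is at most one element, up to scalar, whose support lies in a given shift B_g of a biprojection and whose Fourier support lies in a given shift B̃_h of the dual biprojection — specialized to L^∞(ℤ/Nℤ).) -/

import Mathlib

/-!
If `f` is supported in `a + H`, then on `b + H^⊥` its Fourier transform is a fixed character
times the single value `𝓕 f b`. If moreover `𝓕 f` is supported in `b + H^⊥`, this determines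
`𝓕 f`, hence `f`. So `f ↦ 𝓕 f b` is an injective linear functional on the space of such `f`,
which is therefore at most one-dimensional.
-/

open Complex Finset

/-- The unitary discrete Fourier transform on `ZMod N`. -/
noncomputable def dft (N : ℕ) [NeZero N] (f : ZMod N → ℂ) : ZMod N → ℂ :=
  fun k => (((N : ℝ) ^ (-(1/2 : ℝ)) : ℝ) : ℂ) *
    ∑ x : ZMod N, f x *
      Complex.exp (-2 * Real.pi * Complex.I * (k.val : ℂ) * (x.val : ℂ) / (N : ℂ))

open Function ZMod

lemma dft_apply_eq_mul_dft (N : ℕ) [NeZero N] (f : ZMod N → ℂ) (k : ZMod N) :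
    dft N f k = (((N : ℝ) ^ (-(1/2 : ℝ)) : ℝ) : ℂ) * 𝓕 f k := by
  rw [_root_.dft, ZMod.dft_apply]
  congr 1
  refine Finset.sum_congr rfl fun x _ => ?_
  have hcast : -(x * k) = ((-(x.val * k.val : ℤ) : ℤ) : ZMod N) := by
    push_cast
    rw [natCast_val, natCast_val, cast_id, cast_id]
  rw [smul_eq_mul, hcast, stdAddChar_coe, mul_comm]
  congr 1
  push_cast
  ring_nf

lemma support_dft (N : ℕ) [NeZero N] (f : ZMod N → ℂ) : support (dft N f) = support (𝓕 f) := by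
  ext k
  have hN : (((N : ℝ) ^ (-(1/2 : ℝ)) : ℝ) : ℂ) ≠ 0 := by
    exact_mod_cast (Real.rpow_pos_of_pos (by exact_mod_cast NeZero.pos N) _).ne'
  simp only [mem_support, dft_apply_eq_mul_dft, ne_eq, mul_eq_zero, hN, false_or]

lemma support_sub_smul_subset {α R M : Type*} [Monoid R] [AddGroup M] [DistribMulAction R M]
    {s : Set α} {f g : α → M} (hf : support f ⊆ s) (hg : support g ⊆ s) (c : R) :
    support (g - c • f) ⊆ s :=
  (support_sub g _).trans <| Set.union_subset hg <| (support_const_smul_subset c f).trans hf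

section CosetSupport

variable {N : ℕ} [NeZero N] {E : Type*} [AddCommGroup E] [Module ℂ E]
  {H : AddSubgroup (ZMod N)} {a b : ZMod N} {f : ZMod N → E}

lemma dft_apply_eq_smul_dft_apply (hf : support f ⊆ {x | x - a ∈ H}) {k : ZMod N}
    (hk : ∀ x ∈ H, (k - b) * x = 0) :
    𝓕 f k = stdAddChar (-(a * (k - b))) • 𝓕 f b := by
  rw [ZMod.dft_apply, ZMod.dft_apply, Finset.smul_sum]
  refine Finset.sum_congr rfl fun x _ => ?_
  by_cases hx : f x = 0
  · simp [hx]
  · have hxk : x * k = a * (k - b) + x * b := by linear_combination hk _ (hf hx)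
    rw [hxk, neg_add, AddChar.map_add_eq_mul, mul_smul]

lemma eq_zero_of_dft_apply_eq_zero (hf : support f ⊆ {x | x - a ∈ H})
    (hfF : support (𝓕 f) ⊆ {k | ∀ x ∈ H, (k - b) * x = 0}) (hb : 𝓕 f b = 0) : f = 0 := by
  suffices 𝓕 f = 0 from ZMod.dft.injective (by rwa [map_zero])
  funext k
  by_cases hk : ∀ x ∈ H, (k - b) * x = 0
  · rw [dft_apply_eq_smul_dft_apply hf hk, hb, smul_zero, Pi.zero_apply]
  · exact notMem_support.mp fun hmem => hk (hfF hmem)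

end CosetSupport

/-- Uniqueness up to scalar: if two functions are supported in the same coset
a + H and their Fourier transforms are supported in the same coset b + H^⊥,
and the first is nonzero, then the second is a scalar multiple of the first. -/
theorem unique_up_to_scalar (N : ℕ) [NeZero N] (H : AddSubgroup (ZMod N))
    (a b : ZMod N) (f₁ f₂ : ZMod N → ℂ)
    (hf₁ : Function.support f₁ ⊆ {x : ZMod N | x - a ∈ H})
    (hf₁F : Function.support (dft N f₁) ⊆
      {k : ZMod N | k - b ∈ {k' : ZMod N | ∀ x ∈ H, k' * x = 0}})
    (hf₂ : Function.support f₂ ⊆ {x : ZMod N | x - a ∈ H})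
    (hf₂F : Function.support (dft N f₂) ⊆
      {k : ZMod N | k - b ∈ {k' : ZMod N | ∀ x ∈ H, k' * x = 0}})
    (hne : f₁ ≠ 0) :
    ∃ l : ℂ, f₂ = fun x => l * f₁ x := by
  rw [support_dft] at hf₁F hf₂F
  have hb : 𝓕 f₁ b ≠ 0 := fun h => hne (eq_zero_of_dft_apply_eq_zero hf₁ hf₁F h)
  set l := 𝓕 f₂ b / 𝓕 f₁ b
  have hdiff : f₂ - l • f₁ = 0 := by
    refine eq_zero_of_dft_apply_eq_zero (b := b) (support_sub_smul_subset hf₁ hf₂ l) ?_ ?_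
    · rw [map_sub, _root_.map_smul]
      exact support_sub_smul_subset hf₁F hf₂F l
    · simp [l, hb]
  exact ⟨l, funext fun x => by simpa [sub_eq_zero] using congrFun hdiff x⟩
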